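/- arXiv:1312.0758 — 3 statements merged into one kernel-verified Lean document; each statement's English description precedes it below -/
import Mathlib

section
/- In an associative algebra with elements U, V invertible and satisfying UV = qVU for a nonzero scalar q, define w_m^{(k)} = q^{-km} U^m V^k. Then [w_m^{(k)}, w_n^{(l)}] = (q^{ml} - q^{nk}) w_{m+n}^{(k+l)} for all integers m,n,k,l. -/
/-!
Conjugation by `U` is an automorphism sending `V` to `q V`, hence `V ^ k` to `q ^ k V ^ k`;
applied to the reversed relation `V U = q⁻¹ U V` this gives `U ^ m V = q ^ m V U ^ m`, and applied
once more to the pair `(U ^ m, V)` it gives `U ^ m V ^ k = q ^ (m k) V ^ k U ^ m`. With this,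
`w_m^{(k)} w_n^{(l)} = q ^ (m l) w_{m+n}^{(k+l)}`, and the bracket is the difference of the two orders.
-/

section Group

variable {G : Type*} [Group G] {c u v : G}

theorem mul_zpow_eq_zpow_mul_zpow_mul (hc : c ∈ Subgroup.center G) (h : u * v = c * (v * u))
    (k : ℤ) : u * v ^ k = c ^ k * (v ^ k * u) := by
  have hconj : u * v * u⁻¹ = c * v := by rw [h, ← mul_assoc, mul_inv_cancel_right]
  have hcv : Commute c v := (Subgroup.mem_center_iff.mp hc v).symm
  calc u * v ^ k = u * v ^ k * u⁻¹ * u := by group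
    _ = (c * v) ^ k * u := by rw [← conj_zpow, hconj]
    _ = c ^ k * (v ^ k * u) := by rw [hcv.mul_zpow, mul_assoc]

theorem zpow_mul_zpow_eq_zpow_mul_mul (hc : c ∈ Subgroup.center G) (h : u * v = c * (v * u))
    (m k : ℤ) : u ^ m * v ^ k = c ^ (m * k) * (v ^ k * u ^ m) := by
  have hc' : c⁻¹ ∈ Subgroup.center G := inv_mem hc
  have hvu : v * u = c⁻¹ * (u * v) := by rw [h, inv_mul_cancel_left]
  have hvum : v * u ^ m = c⁻¹ ^ m * (u ^ m * v) := mul_zpow_eq_zpow_mul_zpow_mul hc' hvu m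
  have humv : u ^ m * v = c ^ m * (v * u ^ m) := by
    rw [hvum, inv_zpow', zpow_neg, mul_inv_cancel_left]
  rw [mul_zpow_eq_zpow_mul_zpow_mul (zpow_mem hc m) humv k, zpow_mul]

end Group

section Algebra

variable {F A : Type*} [Field F] [Ring A] [Algebra F A]

theorem Units.zpow_mul_zpow_of_mul_eq_smul {q : F} (hq : q ≠ 0) {U V : Aˣ}
    (hUV : (U : A) * V = q • ((V : A) * U)) (m k : ℤ) :
    ((U ^ m : Aˣ) : A) * ((V ^ k : Aˣ) : A)
      = q ^ (m * k) • (((V ^ k : Aˣ) : A) * ((U ^ m : Aˣ) : A)) := by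
  set Q : Aˣ := Units.map (algebraMap F A : F →* A) (Units.mk0 q hq)
  have hQ_val (n : ℤ) : ((Q ^ n : Aˣ) : A) = algebraMap F A (q ^ n) := by
    rw [← map_zpow, Units.coe_map, MonoidHom.coe_coe, Units.val_zpow_eq_zpow_val, Units.val_mk0]
  have hQ : Q ∈ Subgroup.center Aˣ :=
    Subgroup.mem_center_iff.mpr fun g ↦ Units.ext (Algebra.commutes q (g : A)).symm
  have hUV' : U * V = Q * (V * U) := by
    ext
    simpa [Q, Algebra.smul_def] using hUV
  have := congrArg Units.val (zpow_mul_zpow_eq_zpow_mul_mul hQ hUV' m k)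
  rwa [Units.val_mul, Units.val_mul, hQ_val, ← Algebra.smul_def] at this

end Algebra

noncomputable def quantumTorusMonomial {F A : Type*} [Field F] [Ring A] [Algebra F A]
    (q : F) (U V : Aˣ) (m k : ℤ) : A :=
  (q ^ (k * m))⁻¹ • (((U ^ m : Aˣ) : A) * ((V ^ k : Aˣ) : A))

theorem quantumTorusMonomial_mul {F A : Type*} [Field F] [Ring A] [Algebra F A]
    {q : F} (hq : q ≠ 0) {U V : Aˣ} (hUV : (U : A) * V = q • ((V : A) * U)) (m k n l : ℤ) :
    quantumTorusMonomial q U V m k * quantumTorusMonomial q U V n l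
      = q ^ (m * l) • quantumTorusMonomial q U V (m + n) (k + l) := by
  have hVU : ((V ^ k : Aˣ) : A) * ((U ^ n : Aˣ) : A)
      = (q ^ (n * k))⁻¹ • (((U ^ n : Aˣ) : A) * ((V ^ k : Aˣ) : A)) := by
    rw [Units.zpow_mul_zpow_of_mul_eq_smul hq hUV, inv_smul_smul₀ (zpow_ne_zero _ hq)]
  have hscalar : (q ^ (k * m))⁻¹ * (q ^ (l * n))⁻¹ * (q ^ (n * k))⁻¹
      = q ^ (m * l) * (q ^ ((k + l) * (m + n)))⁻¹ := by
    simp only [← zpow_neg, ← zpow_add₀ hq]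
    ring_nf
  simp only [quantumTorusMonomial, smul_mul_smul, smul_smul, zpow_add, Units.val_mul]
  rw [mul_assoc, ← mul_assoc ((V ^ k : Aˣ) : A), hVU, smul_mul_assoc, mul_smul_comm, smul_smul,
    hscalar]
  simp only [mul_assoc]

/-- Quantum torus relation for w_m^{(k)} = q^{-km} U^m V^k, all integer indices. -/
theorem stmt_1 {F A : Type*} [Field F] [Ring A] [Algebra F A]
    (q : F) (hq : q ≠ 0) (U V : Aˣ)
    (hUV : (U : A) * V = q • ((V : A) * U))
    (w : ℤ → ℤ → A)
    (hw : ∀ m k : ℤ, w m k = (q ^ (k * m))⁻¹ • (((U ^ m : Aˣ) : A) * ((V ^ k : Aˣ) : A))) :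
    ∀ m k n l : ℤ,
      w m k * w n l - w n l * w m k
        = (q ^ (m * l) - q ^ (n * k)) • w (m + n) (k + l) := by
  obtain rfl : w = quantumTorusMonomial q U V := funext₂ hw
  intro m k n l
  rw [quantumTorusMonomial_mul hq hUV, quantumTorusMonomial_mul hq hUV, add_comm n m,
    add_comm l k, sub_smul]
end

section
/- In the quantum torus Lie algebra with central term, the bracket [V_{n,m}, V_{l,k}] = (q^{(ml−nk)/2} − q^{−(ml−nk)/2})(V_{n+l,m+k} − δ_{n+l,0} · q^{m+k}/(1 − q^{m+k}) · c), where c is central, satisfies the Jacobi identity (for indices with m+k ≠ 0 whenever n+l = 0 occurs, or working over the field ℚ(q^{1/2}) where 1 − q^{m+k} is invertible for m+k ≠ 0). -/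
/-!
Both identities are (tri)linear, so it suffices to check them on basis vectors, and the
central element only ever appears in brackets that vanish. For three vectors `V_u, V_v, V_w`
every term of the Jacobi sum is a scalar multiple of the same vector
`V_{u+v+w} - g(u+v+w) c`, where `g` is the coefficient of the central correction, so the central correction cancels along with the main term, and the
identity reduces to the scalar identity `Σ_cyc φ(X) φ(Z - Y) = 0` for `φ(n) = s^n - s^(-n)`,
where `X, Y, Z` are the values of the symplectic form `ml - nk` on the three pairs.
-/

open Finsupp

namespace Finsupp

variable {R ι M : Type*} [CommSemiring R] [AddCommMonoid M] [Module R M]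

variable (R) in
noncomputable def linearCombination₂ (B : ι → ι → M) :
    (ι →₀ R) →ₗ[R] (ι →₀ R) →ₗ[R] M :=
  linearCombination R fun a => linearCombination R (B a)

theorem linearCombination₂_apply (B : ι → ι → M) (x y : ι →₀ R) :
    linearCombination₂ R B x y = x.sum fun a ca => y.sum fun b cb => (ca * cb) • B a b := by
  simp only [linearCombination₂, linearCombination_apply, Finsupp.sum, LinearMap.sum_apply,
    LinearMap.smul_apply, Finset.smul_sum, smul_smul]

@[simp]
theorem linearCombination₂_single_single (B : ι → ι → M) (a b : ι) (ca cb : R) :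
    linearCombination₂ R B (single a ca) (single b cb) = (ca * cb) • B a b := by
  simp [linearCombination₂, smul_smul]

theorem linearCombination₂_antisymm {M : Type*} [AddCommGroup M] [Module R M] {B : ι → ι → M}
    (hB : ∀ a b, B a b = -B b a) (x y : ι →₀ R) :
    linearCombination₂ R B x y = -linearCombination₂ R B y x := by
  have h : linearCombination₂ R B = -(linearCombination₂ R B).flip :=
    lhom_ext fun a ca => lhom_ext fun b cb => by simp [hB a b, mul_comm]
  exact LinearMap.congr_fun₂ h x y

end Finsupp

section Jacobiator

variable {R M : Type*} [CommSemiring R] [AddCommGroup M] [Module R M] (L : M →ₗ[R] M →ₗ[R] M)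

def jacobiator (x y z : M) : M := L x (L y z) + L y (L z x) + L z (L x y)

variable {L}

theorem jacobiator_cycle (x y z : M) : jacobiator L x y z = jacobiator L y z x := by
  simp only [jacobiator]; abel

theorem jacobiator_add_left (x x' y z : M) :
    jacobiator L (x + x') y z = jacobiator L x y z + jacobiator L x' y z := by
  simp only [jacobiator, map_add, LinearMap.add_apply]; abel

theorem jacobiator_smul_left (c : R) (x y z : M) :
    jacobiator L (c • x) y z = c • jacobiator L x y z := by
  simp only [jacobiator, map_smul, LinearMap.smul_apply, smul_add]

theorem jacobiator_zero_left (y z : M) : jacobiator L 0 y z = 0 := by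
  simpa using jacobiator_smul_left (L := L) (0 : R) 0 y z

end Jacobiator

section FinsuppJacobiator

variable {R ι : Type*} [CommRing R] {L : (ι →₀ R) →ₗ[R] (ι →₀ R) →ₗ[R] (ι →₀ R)}

theorem jacobiator_eq_zero_of_single_left {y z : ι →₀ R}
    (h : ∀ a, jacobiator L (single a 1) y z = 0) (x : ι →₀ R) : jacobiator L x y z = 0 := by
  induction x using Finsupp.induction_linear with
  | zero => exact jacobiator_zero_left y z
  | add x x' hx hx' => rw [jacobiator_add_left, hx, hx', add_zero]
  | single a c => rw [← smul_single_one, jacobiator_smul_left, h, smul_zero]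

/-- Trilinearity and cyclic symmetry reduce the Jacobi identity to basis vectors,
one argument at a time. -/
theorem jacobiator_eq_zero_of_single
    (h : ∀ a b c, jacobiator L (single a 1) (single b 1) (single c 1) = 0) (x y z : ι →₀ R) :
    jacobiator L x y z = 0 := by
  have h₂ (a b : ι) (z : ι →₀ R) : jacobiator L (single a 1) (single b 1) z = 0 := by
    rw [jacobiator_cycle, jacobiator_cycle]
    exact jacobiator_eq_zero_of_single_left (fun c => by rw [jacobiator_cycle]; exact h a b c) z
  have h₁ (a : ι) (y z : ι →₀ R) : jacobiator L (single a 1) y z = 0 := by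
    rw [jacobiator_cycle]
    exact jacobiator_eq_zero_of_single_left
      (fun b => by rw [jacobiator_cycle, jacobiator_cycle]; exact h₂ a b z) y
  exact jacobiator_eq_zero_of_single_left (h₁ · y z) x

end FinsuppJacobiator

section CentralExtension

variable {R A : Type*} [CommRing R] [AddCommGroup A] (f : A → A → R) (g : A → R)

/-- `[V_u, V_v] = f u v • (V_{u+v} - g (u+v) • c)` with `V_u = single (inl u) 1` and the central
element `c = single (inr ()) 1`. -/
noncomputable def centralExtBracket : A ⊕ Unit → A ⊕ Unit → (A ⊕ Unit →₀ R)
  | .inl u, .inl v => f u v • (single (.inl (u + v)) 1 - g (u + v) • single (.inr ()) 1)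
  | _, _ => 0

local notation "L" => linearCombination₂ R (centralExtBracket f g)

variable {f g}

theorem centralExtBracket_antisymm (hf : ∀ u v, f u v = -f v u) (a b : A ⊕ Unit) :
    centralExtBracket f g a b = -centralExtBracket f g b a := by
  rcases a with u | _ <;> rcases b with v | _
  · simp only [centralExtBracket, hf u v, add_comm u v, neg_smul]
  all_goals simp [centralExtBracket]

variable (f g)

@[simp]
theorem linearCombination₂_centralExtBracket_inr_left (c : R) :
    L (single (.inr ()) c) = 0 :=
  lhom_ext fun b cb => by cases b <;> simp [centralExtBracket]

@[simp]
theorem linearCombination₂_centralExtBracket_inr_right (x : A ⊕ Unit →₀ R) (c : R) :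
    L x (single (.inr ()) c) = 0 :=
  LinearMap.congr_fun (lhom_ext (φ := (L).flip (single (.inr ()) c)) (ψ := 0)
    fun a ca => by cases a <;> simp [centralExtBracket]) x

theorem linearCombination₂_single_centralExtBracket (u v w : A) :
    L (single (.inl u) 1) (centralExtBracket f g (.inl v) (.inl w))
      = f v w • centralExtBracket f g (.inl u) (.inl (v + w)) := by
  simp only [centralExtBracket, map_smul, map_sub, linearCombination₂_single_single, one_mul,
    one_smul, smul_zero, sub_zero]

variable {f g}

theorem jacobiator_centralExtBracket
    (hf : ∀ u v w, f v w * f u (v + w) + f w u * f v (w + u) + f u v * f w (u + v) = 0)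
    (x y z : A ⊕ Unit →₀ R) : jacobiator (L) x y z = 0 := by
  refine jacobiator_eq_zero_of_single (fun a b c => ?_) x y z
  rcases a with u | ⟨⟩ <;> rcases b with v | ⟨⟩ <;> rcases c with w | ⟨⟩
  case inl.inl.inl =>
    have hv : v + (w + u) = u + (v + w) := by abel
    have hw : w + (u + v) = u + (v + w) := by abel
    simp only [jacobiator, linearCombination₂_single_single, one_mul, one_smul,
      linearCombination₂_single_centralExtBracket]
    simp only [centralExtBracket, hv, hw, smul_smul, ← add_smul, hf, zero_smul]
  all_goals simp [jacobiator, centralExtBracket]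

end CentralExtension

section QuantumTorus

variable {K A : Type*} [Field K] [AddCommGroup A]

theorem zpow_sub_zpow_neg_cyclic_sum (s : K) (X Y Z : ℤ) :
    (s ^ X - s ^ (-X)) * (s ^ (Z - Y) - s ^ (-(Z - Y)))
      + (s ^ Y - s ^ (-Y)) * (s ^ (X - Z) - s ^ (-(X - Z)))
      + (s ^ Z - s ^ (-Z)) * (s ^ (Y - X) - s ^ (-(Y - X))) = 0 := by
  rcases eq_or_ne s 0 with rfl | hs
  · -- every factor vanishes: `0 ^ 0 = 1` and otherwise `0 ^ n = 0 ^ (-n) = 0`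
    have h (n : ℤ) : (0 : K) ^ n - 0 ^ (-n) = 0 := by
      rcases eq_or_ne n 0 with rfl | hn
      · simp
      · simp [zero_zpow, hn]
    simp only [h, zero_mul, add_zero]
  · simp only [zpow_sub₀ hs, zpow_neg]
    have := zpow_ne_zero X hs
    have := zpow_ne_zero Y hs
    have := zpow_ne_zero Z hs
    field_simp
    ring

theorem zpow_form_cocycle {s : K} {ω : A → A → ℤ} {f : A → A → K}
    (hf : ∀ u v, f u v = s ^ ω u v - s ^ (-ω u v))
    (hadd : ∀ u v w, ω u (v + w) = ω u v + ω u w) (hanti : ∀ u v, ω u v = -ω v u) (u v w : A) :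
    f v w * f u (v + w) + f w u * f v (w + u) + f u v * f w (u + v) = 0 := by
  simp only [hf, hadd, hanti u w, hanti v u, hanti w v, ← sub_eq_add_neg]
  exact zpow_sub_zpow_neg_cyclic_sum s (ω v w) (ω w u) (ω u v)

end QuantumTorus

def torusForm (u v : ℤ × ℤ) : ℤ := u.2 * v.1 - u.1 * v.2

theorem torusForm_add_right (u v w : ℤ × ℤ) :
    torusForm u (v + w) = torusForm u v + torusForm u w := by
  simp only [torusForm, Prod.fst_add, Prod.snd_add]; ring

theorem torusForm_antisymm (u v : ℤ × ℤ) : torusForm u v = -torusForm v u := by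
  simp only [torusForm]; ring

theorem stmt_9_general
    (s : RatFunc ℚ) (q : RatFunc ℚ)
    (Bb : (ℤ × ℤ) ⊕ Unit → (ℤ × ℤ) ⊕ Unit → ((ℤ × ℤ) ⊕ Unit →₀ RatFunc ℚ))
    (hBb1 : ∀ n m l k : ℤ, Bb (Sum.inl (n, m)) (Sum.inl (l, k))
      = (s ^ (m * l - n * k) - s ^ (-(m * l - n * k))) •
          (Finsupp.single (Sum.inl (n + l, m + k)) (1 : RatFunc ℚ) -
            (if n + l = 0 ∧ m + k ≠ 0 then q ^ (m + k) / (1 - q ^ (m + k)) else 0) •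
              Finsupp.single (Sum.inr ()) (1 : RatFunc ℚ)))
    (hBb2 : ∀ a, Bb (Sum.inr ()) a = 0)
    (hBb3 : ∀ a, Bb a (Sum.inr ()) = 0)
    (br : ((ℤ × ℤ) ⊕ Unit →₀ RatFunc ℚ) → ((ℤ × ℤ) ⊕ Unit →₀ RatFunc ℚ) →
      ((ℤ × ℤ) ⊕ Unit →₀ RatFunc ℚ))
    (hbr : ∀ x y, br x y = x.sum fun a ca => y.sum fun b cb => (ca * cb) • Bb a b) :
    (∀ x y, br x y = - br y x) ∧
    (∀ x y z, br x (br y z) + br y (br z x) + br z (br x y) = 0) := by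
  have hB : Bb = centralExtBracket (fun u v => s ^ torusForm u v - s ^ (-torusForm u v))
      (fun w => if w.1 = 0 ∧ w.2 ≠ 0 then q ^ w.2 / (1 - q ^ w.2) else 0) := by
    funext a b
    rcases a with ⟨n, m⟩ | ⟨⟩ <;> rcases b with ⟨l, k⟩ | ⟨⟩
    · exact hBb1 n m l k
    all_goals simp [hBb2, hBb3, centralExtBracket]
  obtain rfl : br = fun x y => linearCombination₂ _ Bb x y :=
    funext₂ fun x y => (hbr x y).trans (linearCombination₂_apply Bb x y).symm
  subst hB
  exact ⟨linearCombination₂_antisymm (centralExtBracket_antisymm fun u v => by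
      rw [torusForm_antisymm u v, neg_neg, neg_sub]),
    jacobiator_centralExtBracket
      (zpow_form_cocycle (fun _ _ => rfl) torusForm_add_right torusForm_antisymm)⟩

/-- The centrally extended quantum torus bracket (over ℚ(s), q = s²) is
antisymmetric and satisfies the Jacobi identity.  The basis consists of the
V_{n,m} (indexed by ℤ × ℤ, via Sum.inl) and a central element c (Sum.inr). -/
theorem stmt_9
    (s : RatFunc ℚ) (hs : s = RatFunc.X) (q : RatFunc ℚ) (hq : q = s ^ 2)
    (Bb : (ℤ × ℤ) ⊕ Unit → (ℤ × ℤ) ⊕ Unit → ((ℤ × ℤ) ⊕ Unit →₀ RatFunc ℚ))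
    (hBb1 : ∀ n m l k : ℤ, Bb (Sum.inl (n, m)) (Sum.inl (l, k))
      = (s ^ (m * l - n * k) - s ^ (-(m * l - n * k))) •
          (Finsupp.single (Sum.inl (n + l, m + k)) (1 : RatFunc ℚ) -
            (if n + l = 0 ∧ m + k ≠ 0 then q ^ (m + k) / (1 - q ^ (m + k)) else 0) •
              Finsupp.single (Sum.inr ()) (1 : RatFunc ℚ)))
    (hBb2 : ∀ a, Bb (Sum.inr ()) a = 0)
    (hBb3 : ∀ a, Bb a (Sum.inr ()) = 0)
    (br : ((ℤ × ℤ) ⊕ Unit →₀ RatFunc ℚ) → ((ℤ × ℤ) ⊕ Unit →₀ RatFunc ℚ) →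
      ((ℤ × ℤ) ⊕ Unit →₀ RatFunc ℚ))
    (hbr : ∀ x y, br x y = x.sum fun a ca => y.sum fun b cb => (ca * cb) • Bb a b) :
    (∀ x y, br x y = - br y x) ∧
    (∀ x y z, br x (br y z) + br y (br z x) + br z (br x y) = 0) :=
  stmt_9_general s q Bb hBb1 hBb2 hBb3 br hbr
end

section
/- With L, M as dressed operators (L = Φ∂Φ^{-1}, M = ΦΓΦ^{-1}) where Φ* = ∂Φ^{-1}∂^{-1}, Γ* = Γ, and L* = −∂L∂^{-1}, the operator B_{mn} := M^m L^n − (−1)^n L^{n−1} M^m L satisfies the B-type condition B_{mn}* = −∂ B_{mn} ∂^{-1} for all integers m ≥ 0, n. -/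
/-!
Conjugating the adjoint by `∂`, `τ X = ∂⁻¹ X* ∂`, is again additive and anti-multiplicative, now with
`τ L = -L` and `τ M = L⁻¹ M L`; the claim becomes `τ B = -B`. Since `(-1)ⁿ Lⁿ⁻¹ = -(-L)ⁿ⁻¹`,
`B = Mᵐ Lⁿ + (-L)ⁿ⁻¹ Mᵐ L`, and `τ` sends each of these two summands to minus the other.
-/

section Antimultiplicative

variable {A : Type*} [Ring A] {f : A →+ A}

theorem map_one_of_antimul (hf : ∀ a b : A, f (a * b) = f b * f a) {a : A}
    (ha : IsUnit (f a)) : f 1 = 1 :=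
  ha.mul_left_injective (show f 1 * f a = 1 * f a by rw [← hf, mul_one, one_mul])

theorem map_pow_of_antimul (hf : ∀ a b : A, f (a * b) = f b * f a) (h1 : f 1 = 1)
    (a : A) (n : ℕ) : f (a ^ n) = f a ^ n := by
  induction n with
  | zero => simpa using h1
  | succ n ih => rw [pow_succ', hf, ih, pow_succ]

theorem map_units_inv_of_antimul (hf : ∀ a b : A, f (a * b) = f b * f a) (h1 : f 1 = 1)
    {u v : Aˣ} (h : f u = v) : f ↑u⁻¹ = ↑v⁻¹ := by
  rw [← one_mul (f _), ← v.inv_mul, mul_assoc, ← h, ← hf, u.inv_mul, h1, mul_one]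

theorem map_units_zpow_of_antimul (hf : ∀ a b : A, f (a * b) = f b * f a) (h1 : f 1 = 1)
    {u v : Aˣ} (h : f u = v) (n : ℤ) : f ↑(u ^ n) = ↑(v ^ n) := by
  have hpow (k : ℕ) : f ↑(u ^ k) = ↑(v ^ k) := by
    rw [Units.val_pow_eq_pow_val, map_pow_of_antimul hf h1, h, Units.val_pow_eq_pow_val]
  cases n with
  | ofNat k => exact hpow k
  | negSucc k => simp only [zpow_negSucc]; exact map_units_inv_of_antimul hf h1 (hpow _)

def unitsConj (u : Aˣ) (f : A →+ A) : A →+ A :=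
  (AddMonoidHom.mulRight (u : A)).comp ((AddMonoidHom.mulLeft (↑u⁻¹ : A)).comp f)

@[simp]
theorem unitsConj_apply (u : Aˣ) (f : A →+ A) (a : A) : unitsConj u f a = ↑u⁻¹ * f a * u :=
  rfl

theorem unitsConj_antimul (hf : ∀ a b : A, f (a * b) = f b * f a) (u : Aˣ) (a b : A) :
    unitsConj u f (a * b) = unitsConj u f b * unitsConj u f a := by
  simp only [unitsConj_apply, hf, mul_assoc, u.mul_inv_cancel_left]

theorem Units.neg_one_zpow_mul_zpow_sub_one (u : Aˣ) (n : ℤ) :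
    (-1) ^ n * u ^ (n - 1) = -(-u) ^ (n - 1) := by
  rw [← neg_one_mul u, (Commute.neg_one_left u).mul_zpow, ← neg_mul, zpow_sub_one (-1 : Aˣ) n]
  simp

def bOperator (L : Aˣ) (M : A) (m : ℕ) (n : ℤ) : A :=
  M ^ m * ↑(L ^ n) - ↑((-1) ^ n : Aˣ) * ↑(L ^ (n - 1)) * M ^ m * L

theorem bOperator_eq_add (L : Aˣ) (M : A) (m : ℕ) (n : ℤ) :
    bOperator L M m n = M ^ m * ↑(L ^ n) + ↑((-L) ^ (n - 1)) * M ^ m * L := by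
  rw [bOperator, ← Units.val_mul, Units.neg_one_zpow_mul_zpow_sub_one, Units.val_neg, neg_mul,
    neg_mul, sub_neg_eq_add]

theorem map_bOperator_of_antimul (hf : ∀ a b : A, f (a * b) = f b * f a)
    (h1 : f 1 = 1) {L : Aˣ} {M : A} (hL : f L = ↑(-L)) (hM : f M = ↑L⁻¹ * M * L)
    (m : ℕ) (n : ℤ) : f (bOperator L M m n) = -bOperator L M m n := by
  have hMm : f (M ^ m) = ↑L⁻¹ * M ^ m * L := by
    rw [map_pow_of_antimul hf h1, hM, Units.conj_pow']
  have hnegL : f ↑(-L) = L := by rw [Units.val_neg, map_neg, hL, Units.val_neg, neg_neg]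
  have hfirst : f (M ^ m * ↑(L ^ n)) = -(↑((-L) ^ (n - 1)) * M ^ m * L) := by
    have : (-L) ^ n * L⁻¹ = -(-L) ^ (n - 1) := by simp [zpow_sub_one]
    rw [hf, map_units_zpow_of_antimul hf h1 hL, hMm, ← mul_assoc, ← mul_assoc, ← Units.val_mul,
      this, Units.val_neg, neg_mul, neg_mul]
  have hsecond : f (↑((-L) ^ (n - 1)) * M ^ m * L) = -(M ^ m * ↑(L ^ n)) := by
    have : L * L ^ (n - 1) = L ^ n := by rw [← zpow_one_add, add_sub_cancel]
    rw [hf, hf, hL, hMm, map_units_zpow_of_antimul hf h1 hnegL]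
    simp [mul_assoc, ← this]
  rw [bOperator_eq_add, map_add, hfirst, hsecond, neg_add_rev]

end Antimultiplicative

theorem stmt_14_general {A : Type*} [Ring A] (st : A →+ A)
    (hanti : ∀ a b : A, st (a * b) = st b * st a)
    (d : Aˣ)
    (L : Aˣ) (M : A)
    (hL : st (L : A) = -((d : A) * (L : A) * ((d⁻¹ : Aˣ) : A)))
    (hM : st M = (d : A) * ((L⁻¹ : Aˣ) : A) * M * (L : A) * ((d⁻¹ : Aˣ) : A))
    (B : ℕ → ℤ → A)
    (hB : ∀ (m : ℕ) (n : ℤ), B m n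
      = M ^ m * ((L ^ n : Aˣ) : A) -
          (((-1 : Aˣ) ^ n : Aˣ) : A) * ((L ^ (n - 1) : Aˣ) : A) * M ^ m * (L : A)) :
    ∀ (m : ℕ) (n : ℤ), st (B m n) = -((d : A) * B m n * ((d⁻¹ : Aˣ) : A)) := by
  intro m n
  have hτ := unitsConj_antimul hanti d
  have hτL : unitsConj d st L = ↑(-L) := by simp [hL, mul_assoc]
  have hτM : unitsConj d st M = ↑L⁻¹ * M * L := by simp [hM, mul_assoc]
  have hτ1 : unitsConj d st 1 = 1 := map_one_of_antimul hτ (hτL ▸ Units.isUnit _)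
  have hτB : unitsConj d st (B m n) = -B m n := by
    rw [hB]
    exact map_bOperator_of_antimul hτ hτ1 hτL hτM m n
  calc st (B m n) = d * unitsConj d st (B m n) * ↑d⁻¹ := by simp [mul_assoc]
    _ = -(d * B m n * ↑d⁻¹) := by rw [hτB, mul_neg, neg_mul]

/-- B-type condition for B_{mn} = M^m L^n - (-1)^n L^{n-1} M^m L. -/
theorem stmt_14 {A : Type*} [Ring A] (st : A →+ A)
    (hanti : ∀ a b : A, st (a * b) = st b * st a)
    (hinv : ∀ a : A, st (st a) = a)
    (d : Aˣ) (hd : st (d : A) = -(d : A))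
    (L : Aˣ) (M : A)
    (hL : st (L : A) = -((d : A) * (L : A) * ((d⁻¹ : Aˣ) : A)))
    (hM : st M = (d : A) * ((L⁻¹ : Aˣ) : A) * M * (L : A) * ((d⁻¹ : Aˣ) : A))
    (B : ℕ → ℤ → A)
    (hB : ∀ (m : ℕ) (n : ℤ), B m n
      = M ^ m * ((L ^ n : Aˣ) : A) -
          (((-1 : Aˣ) ^ n : Aˣ) : A) * ((L ^ (n - 1) : Aˣ) : A) * M ^ m * (L : A)) :
    ∀ (m : ℕ) (n : ℤ), st (B m n) = -((d : A) * B m n * ((d⁻¹ : Aˣ) : A)) :=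
  stmt_14_general st hanti d L M hL hM B hB
end
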